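/- For any graph G and any subset X of V(G), the graph G - delta_G(X) obtained from G by deleting all edges of delta_G(X) is a 2*rho_G(X)-perturbation of G. -/

import Mathlib

/-!
Factor the `X × Xᶜ` block of the adjacency matrix over `GF(2)` as `∑_{i < r} a_i b_iᵀ` with
`r = ρ_G(X)`, `a_i` supported on `X` and `b_i` on `Xᶜ`. Add to `G` an edge `u_i w_i` for each `i`,
with `u_i` joined to the support of `a_i` and `w_i` to that of `b_i`. Pivoting on `u_i w_i` adds
`a_i b_iᵀ + b_i a_iᵀ` to the adjacency matrix on `V` and, since no other new vertex is adjacent to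
`u_i` or `w_i`, leaves the remaining new vertices untouched. After all `r` pivots the `X × Xᶜ` block
has changed by `∑ a_i b_iᵀ`, which is that block itself, so the crossing edges are gone: the graph on
`|V| + 2r` vertices has `G` and `G - δ_G(X)` as vertex-minors on `V`.
-/

namespace EP

variable {V W : Type}

/-- Local complementation of `G` at `v`: complement the adjacency between
every pair of distinct neighbours of `v`. -/
def localComp (G : SimpleGraph V) (v : V) : SimpleGraph V where
  Adj x y := x ≠ y ∧
    ((G.Adj v x ∧ G.Adj v y ∧ ¬ G.Adj x y) ∨ (¬(G.Adj v x ∧ G.Adj v y) ∧ G.Adj x y))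
  symm := by
    constructor
    intro x y h
    obtain ⟨hxy, h⟩ := h
    refine ⟨hxy.symm, ?_⟩
    rcases h with ⟨h1, h2, h3⟩ | ⟨h1, h2⟩
    · exact Or.inl ⟨h2, h1, fun h => h3 h.symm⟩
    · exact Or.inr ⟨fun h => h1 ⟨h.2, h.1⟩, h2.symm⟩
  loopless := ⟨fun x h => h.1 rfl⟩

/-- Two graphs on the same vertex set are locally equivalent if one is obtained from
the other by a sequence of local complementations. -/
def LocEquiv (G G' : SimpleGraph V) : Prop :=
  Relation.ReflTransGen (fun A B => ∃ v, B = localComp A v) G G'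

/-- `H` is a vertex-minor of `G`, located at the embedding `f`: some graph locally
equivalent to `G` induces a copy of `H` on the image of `f` (equivalently, `H` is
obtained from `G` by a sequence of local complementations and vertex deletions,
with `f` recording the surviving vertices). -/
def IsVertexMinorAt (G : SimpleGraph V) (H : SimpleGraph W) (f : W ↪ V) : Prop :=
  ∃ G' : SimpleGraph V, LocEquiv G G' ∧ ∀ x y, H.Adj x y ↔ G'.Adj (f x) (f y)

/-- `G` has a vertex-minor isomorphic to `H`. -/
def HasVertexMinor (G : SimpleGraph V) (H : SimpleGraph W) : Prop :=
  ∃ f : W ↪ V, IsVertexMinorAt G H f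

/-- `G₁` is a `t`-perturbation of `G₂`: they have the same vertex set `V`, and some
graph on `|V| + t` vertices contains both of them as vertex-minors (on `V`). -/
def IsPerturbation (t : ℕ) (G₁ G₂ : SimpleGraph V) : Prop :=
  ∃ Gbig : SimpleGraph (V ⊕ Fin t),
    IsVertexMinorAt Gbig G₁ ⟨Sum.inl, Sum.inl_injective⟩ ∧
    IsVertexMinorAt Gbig G₂ ⟨Sum.inl, Sum.inl_injective⟩

/-- The disjoint union of `k` copies of `H`. -/
def copies (k : ℕ) (H : SimpleGraph W) : SimpleGraph (Fin k × W) where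
  Adj x y := x.1 = y.1 ∧ H.Adj x.2 y.2
  symm := ⟨fun _ _ h => ⟨h.1.symm, h.2.symm⟩⟩
  loopless := ⟨fun x h => H.loopless.irrefl x.2 h.2⟩

/-- `G` is a circle graph: its vertices can be assigned chords of a circle
(encoded by pairs of distinct endpoints, all `2|V|` endpoints being distinct) so that
two distinct vertices are adjacent iff their chords cross, i.e. exactly one endpoint
of one chord lies strictly between the two endpoints of the other. -/
def IsCircleGraph (G : SimpleGraph V) : Prop :=
  ∃ a b : V → ℝ,
    (∀ u v, a u = a v → u = v) ∧ (∀ u v, b u = b v → u = v) ∧ (∀ u v, a u ≠ b v) ∧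
    ∀ u v, G.Adj u v ↔ u ≠ v ∧
      ¬((min (a u) (b u) < a v ∧ a v < max (a u) (b u)) ↔
        (min (a u) (b u) < b v ∧ b v < max (a u) (b u)))

/-- `G` is `t`-robust for `H` if every `t`-perturbation of `G` has a vertex-minor
isomorphic to `H`. -/
def Robust (t : ℕ) (G : SimpleGraph V) (H : SimpleGraph W) : Prop :=
  ∀ G' : SimpleGraph V, IsPerturbation t G' G → HasVertexMinor G' H

open Classical in
/-- The cut-rank of `X` in `G`: the rank over `GF(2)` of the `X × Xᶜ` submatrix of the
adjacency matrix of `G`. -/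
noncomputable def cutRank [Fintype V] (G : SimpleGraph V) (X : Set V) : ℕ :=
  (Matrix.of fun (x : X) (y : ↥Xᶜ) => if G.Adj x.1 y.1 then (1 : ZMod 2) else 0).rank

/-- The graph obtained from `G` by deleting all edges with exactly one end in `X`. -/
def cutDelete (G : SimpleGraph V) (X : Set V) : SimpleGraph V where
  Adj x y := G.Adj x y ∧ (x ∈ X ↔ y ∈ X)
  symm := ⟨fun _ _ h => ⟨h.1.symm, h.2.symm⟩⟩
  loopless := ⟨fun x h => G.loopless.irrefl x h.1⟩

open Classical

section LocalEquivalence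

variable {T T' : Type}

lemma localComp_comap (e : T' ≃ T) (H : SimpleGraph T) (v : T') :
    localComp (H.comap e) v = (localComp H (e v)).comap e := by
  ext x y
  simp [localComp]

lemma LocEquiv.comap {H H' : SimpleGraph T} (h : LocEquiv H H') (e : T' ≃ T) :
    LocEquiv (H.comap e) (H'.comap e) := by
  induction h with
  | refl => exact .refl
  | tail _ hstep ih =>
    obtain ⟨v, rfl⟩ := hstep
    exact ih.tail ⟨e.symm v, by rw [localComp_comap, e.apply_symm_apply]⟩

lemma IsVertexMinorAt.comap {G : SimpleGraph T} {H : SimpleGraph W} {g : W ↪ T'} (e : T' ≃ T)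
    (h : IsVertexMinorAt G H (g.trans e.toEmbedding)) : IsVertexMinorAt (G.comap e) H g := by
  obtain ⟨G', hG', hH⟩ := h
  exact ⟨G'.comap e, hG'.comap e, fun x y => by simp [hH]⟩

lemma _root_.SimpleGraph.adj_iff_adj_of_adjMatrix_eq {H : SimpleGraph T} {H' : SimpleGraph T'}
    {x y : T} {x' y' : T'} (h : H.adjMatrix (ZMod 2) x y = H'.adjMatrix (ZMod 2) x' y') :
    H.Adj x y ↔ H'.Adj x' y' := by
  by_cases hxy : H.Adj x y <;> by_cases hxy' : H'.Adj x' y' <;> simp_all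

def pivot (H : SimpleGraph T) (u w : T) : SimpleGraph T :=
  localComp (localComp (localComp H u) w) u

lemma LocEquiv.pivot (H : SimpleGraph T) (u w : T) : LocEquiv H (pivot H u w) :=
  ((Relation.ReflTransGen.single ⟨u, rfl⟩).tail ⟨w, rfl⟩).tail ⟨u, rfl⟩

lemma adjMatrix_localComp (H : SimpleGraph T) (v : T) {x y : T} (hxy : x ≠ y) :
    (localComp H v).adjMatrix (ZMod 2) x y =
      H.adjMatrix (ZMod 2) x y + H.adjMatrix (ZMod 2) v x * H.adjMatrix (ZMod 2) v y := by
  simp only [SimpleGraph.adjMatrix_apply, localComp, ne_eq]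
  by_cases hx : H.Adj v x <;> by_cases hy : H.Adj v y <;> by_cases h : H.Adj x y <;>
    simp [*, CharTwo.add_self_eq_zero]

lemma adjMatrix_pivot {H : SimpleGraph T} {u w x y : T} (huw : H.Adj u w)
    (hxu : x ≠ u) (hxw : x ≠ w) (hyu : y ≠ u) (hyw : y ≠ w) :
    (pivot H u w).adjMatrix (ZMod 2) x y = H.adjMatrix (ZMod 2) x y +
      H.adjMatrix (ZMod 2) u x * H.adjMatrix (ZMod 2) w y +
      H.adjMatrix (ZMod 2) u y * H.adjMatrix (ZMod 2) w x := by
  by_cases hxy : x = y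
  · subst hxy
    simp only [SimpleGraph.adjMatrix_apply, SimpleGraph.irrefl, if_false, zero_add]
    exact (CharTwo.add_self_eq_zero _).symm
  have hux := hxu.symm
  have hwx := hxw.symm
  have huy := hyu.symm
  have hwy := hyw.symm
  have hwu := huw.ne'
  rw [pivot]
  simp (disch := assumption) only [adjMatrix_localComp]
  have hAuu : H.adjMatrix (ZMod 2) u u = 0 := by simp
  have hAuw : H.adjMatrix (ZMod 2) u w = 1 := by simp [huw]
  have hAwu : H.adjMatrix (ZMod 2) w u = 1 := by simp [huw.symm]
  rw [hAuu, hAuw, hAwu]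
  ring_nf
  reduce_mod_char

end LocalEquivalence

section Extension

variable {ι : Type} (G : SimpleGraph V) (a b : ι → V → ZMod 2)

/-- The adjacency matrix of `G` extended by vertices `(0, i)` and `(1, i)` for `i : ι`, joined to
each other and to the supports of `a i` and `b i` respectively; on `V` it is the adjacency matrix of
`G` plus `a i ⊗ b i + b i ⊗ a i` for each `i ∈ S`. -/
noncomputable def extMatrix (S : Finset ι) : Matrix (V ⊕ Fin 2 × ι) (V ⊕ Fin 2 × ι) (ZMod 2)
  | .inl x, .inl y => G.adjMatrix (ZMod 2) x y + ∑ i ∈ S, (a i x * b i y + a i y * b i x)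
  | .inl x, .inr (k, i) => ![a, b] k i x
  | .inr (k, i), .inl y => ![a, b] k i y
  | .inr (k, i), .inr (l, j) => if i = j ∧ k ≠ l then 1 else 0

lemma isAdjMatrix_extMatrix (S : Finset ι) : (extMatrix G a b S).IsAdjMatrix where
  zero_or_one _ _ := by generalize extMatrix G a b S _ _ = t; revert t; decide
  symm := Matrix.IsSymm.ext fun z z' => by
    rcases z with x | ⟨k, i⟩ <;> rcases z' with y | ⟨l, j⟩
    · simp only [extMatrix, SimpleGraph.adjMatrix_apply]
      rw [G.adj_comm]
      congr 1
      exact Finset.sum_congr rfl fun i _ => add_comm (a i y * b i x) _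
    · simp [extMatrix]
    · simp [extMatrix]
    · simp only [extMatrix]
      congr 1
      exact propext (and_congr eq_comm ne_comm)
  apply_diag z := by
    rcases z with x | ⟨k, i⟩ <;> simp [extMatrix, CharTwo.add_self_eq_zero]

def IsUnpivoted (S : Finset ι) : V ⊕ Fin 2 × ι → Prop
  | .inl _ => True
  | .inr (_, i) => i ∉ S

lemma extMatrix_insert [DecidableEq ι] {s : ι} {S : Finset ι} (hs : s ∉ S)
    {z z' : V ⊕ Fin 2 × ι} (hz : IsUnpivoted (insert s S) z) (hz' : IsUnpivoted (insert s S) z') :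
    extMatrix G a b (insert s S) z z' = extMatrix G a b S z z' +
      extMatrix G a b S (.inr (0, s)) z * extMatrix G a b S (.inr (1, s)) z' +
      extMatrix G a b S (.inr (0, s)) z' * extMatrix G a b S (.inr (1, s)) z := by
  rcases z with x | ⟨k, i⟩ <;> rcases z' with y | ⟨l, j⟩
  · simp only [extMatrix, Finset.sum_insert hs, Matrix.cons_val_zero, Matrix.cons_val_one]
    ring
  all_goals
    simp only [IsUnpivoted, Finset.mem_insert, not_or] at hz hz'
    simp_all [extMatrix, eq_comm]

lemma exists_locEquiv_adjMatrix_eq_extMatrix [DecidableEq ι] (S : Finset ι) :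
    ∃ H, LocEquiv (isAdjMatrix_extMatrix G a b ∅).toGraph H ∧ ∀ z z', IsUnpivoted S z →
      IsUnpivoted S z' → H.adjMatrix (ZMod 2) z z' = extMatrix G a b S z z' := by
  induction S using Finset.induction_on with
  | empty =>
    refine ⟨_, .refl, fun z z' _ _ => ?_⟩
    obtain h | h := (isAdjMatrix_extMatrix G a b ∅).zero_or_one z z' <;> simp [h]
  | @insert s S hs ih =>
    obtain ⟨H, hH, hHS⟩ := ih
    have hS : ∀ {z : V ⊕ Fin 2 × ι}, IsUnpivoted (insert s S) z → IsUnpivoted S z := by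
      rintro (x | ⟨k, i⟩) hz
      exacts [trivial, fun hi => hz (Finset.mem_insert_of_mem hi)]
    have hk : ∀ k : Fin 2, IsUnpivoted S (.inr (k, s) : V ⊕ Fin 2 × ι) := fun _ => hs
    have hne : ∀ {z : V ⊕ Fin 2 × ι} (k : Fin 2), IsUnpivoted (insert s S) z →
        z ≠ .inr (k, s) := by
      rintro _ k hz rfl
      exact hz (Finset.mem_insert_self s S)
    have huw : H.Adj (.inr (0, s)) (.inr (1, s)) := by
      simpa [extMatrix] using hHS _ _ (hk 0) (hk 1)
    refine ⟨pivot H (.inr (0, s)) (.inr (1, s)), hH.trans (LocEquiv.pivot H _ _),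
      fun z z' hz hz' => ?_⟩
    rw [adjMatrix_pivot huw (hne 0 hz) (hne 1 hz) (hne 0 hz') (hne 1 hz'),
      extMatrix_insert G a b hs hz hz', hHS z z' (hS hz) (hS hz'), hHS _ z (hk 0) (hS hz),
      hHS _ z (hk 1) (hS hz), hHS _ z' (hk 0) (hS hz'), hHS _ z' (hk 1) (hS hz')]

end Extension

theorem isPerturbation_of_adjMatrix_eq {r : ℕ} (G G' : SimpleGraph V) (a b : Fin r → V → ZMod 2)
    (h : ∀ x y, G'.adjMatrix (ZMod 2) x y =
      G.adjMatrix (ZMod 2) x y + ∑ i, (a i x * b i y + a i y * b i x)) :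
    IsPerturbation (2 * r) G' G := by
  obtain ⟨H, hH, hHS⟩ := exists_locEquiv_adjMatrix_eq_extMatrix G a b Finset.univ
  let e : V ⊕ Fin (2 * r) ≃ V ⊕ Fin 2 × Fin r := .sumCongr (.refl V) finProdFinEquiv.symm
  refine ⟨_, .comap e ⟨H, hH, fun x y => ?_⟩, .comap e ⟨_, .refl, fun x y => ?_⟩⟩
  · refine SimpleGraph.adj_iff_adj_of_adjMatrix_eq ?_
    rw [h]
    exact (hHS (.inl x) (.inl y) trivial trivial).symm
  · simp [e, extMatrix]

theorem _root_.Matrix.exists_rank_factorization {K m n : Type*} [Field K] [Fintype n]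
    [DecidableEq n] (M : Matrix m n K) :
    ∃ (A : Matrix m (Fin M.rank) K) (B : Matrix (Fin M.rank) n K), M = A * B := by
  let c := Module.finBasis K (LinearMap.range M.mulVecLin)
  have hcol : ∀ y, M.col y ∈ LinearMap.range M.mulVecLin := fun y => ⟨Pi.single y 1, by simp⟩
  refine ⟨Matrix.of fun x i => (c i : m → K) x, Matrix.of fun i y => c.repr ⟨_, hcol y⟩ i, ?_⟩
  ext x y
  have h := congrFun (congrArg Subtype.val (c.sum_repr ⟨_, hcol y⟩)) x
  simp only [Submodule.coe_sum, Submodule.coe_smul, Finset.sum_apply, Pi.smul_apply,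
    smul_eq_mul, Matrix.col_apply] at h
  rw [Matrix.mul_apply, ← h]
  exact Finset.sum_congr rfl fun i _ => mul_comm _ _

lemma exists_cutRank_sum_mul_eq_adjMatrix [Fintype V] (G : SimpleGraph V) (X : Set V) :
    ∃ a b : Fin (cutRank G X) → V → ZMod 2, (∀ i v, v ∉ X → a i v = 0) ∧
      (∀ i v, v ∈ X → b i v = 0) ∧
      ∀ x ∈ X, ∀ y ∉ X, ∑ i, a i x * b i y = G.adjMatrix (ZMod 2) x y := by
  obtain ⟨A, B, hAB⟩ := Matrix.exists_rank_factorization <|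
    Matrix.of fun (x : X) (y : ↥Xᶜ) => if G.Adj x.1 y.1 then (1 : ZMod 2) else 0
  refine ⟨fun i v => if hv : v ∈ X then A ⟨v, hv⟩ i else 0,
    fun i v => if hv : v ∈ Xᶜ then B i ⟨v, hv⟩ else 0,
    fun i v hv => dif_neg hv, fun i v hv => dif_neg (not_not.mpr hv), fun x hx y hy => ?_⟩
  convert (congrFun (congrFun hAB ⟨x, hx⟩) ⟨y, hy⟩).symm using 1
  · simp [hx, hy, Matrix.mul_apply]
    rfl
  · simp

@[simp]
lemma cutDelete_adj {G : SimpleGraph V} {X : Set V} {x y : V} :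
    (cutDelete G X).Adj x y ↔ G.Adj x y ∧ (x ∈ X ↔ y ∈ X) :=
  Iff.rfl

lemma adjMatrix_cutDelete (G : SimpleGraph V) (X : Set V) {r : ℕ} {a b : Fin r → V → ZMod 2}
    (ha : ∀ i v, v ∉ X → a i v = 0) (hb : ∀ i v, v ∈ X → b i v = 0)
    (hab : ∀ x ∈ X, ∀ y ∉ X, ∑ i, a i x * b i y = G.adjMatrix (ZMod 2) x y) (x y : V) :
    (cutDelete G X).adjMatrix (ZMod 2) x y =
      G.adjMatrix (ZMod 2) x y + ∑ i, (a i x * b i y + a i y * b i x) := by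
  by_cases hx : x ∈ X <;> by_cases hy : y ∈ X
  · simp [hx, hy, hb _ _ hx, hb _ _ hy]
  · simp only [ha _ _ hy, zero_mul, add_zero, hab x hx y hy, CharTwo.add_self_eq_zero]
    simp [hx, hy]
  · have hyx := hab y hy x hx
    rw [SimpleGraph.adjMatrix_apply, G.adj_comm, ← SimpleGraph.adjMatrix_apply] at hyx
    simp only [ha _ _ hx, zero_mul, zero_add, hyx, CharTwo.add_self_eq_zero]
    simp [hx, hy]
  · simp [hx, hy, ha _ _ hx, ha _ _ hy]

/-- Deleting all edges crossing `X` is a `2·ρ_G(X)`-perturbation of `G`. -/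
theorem cutDelete_isPerturbation {V : Type} [Fintype V] (G : SimpleGraph V) (X : Set V) :
    IsPerturbation (2 * cutRank G X) (cutDelete G X) G := by
  obtain ⟨a, b, ha, hb, hab⟩ := exists_cutRank_sum_mul_eq_adjMatrix G X
  exact isPerturbation_of_adjMatrix_eq G _ a b (adjMatrix_cutDelete G X ha hb hab)

end EP
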